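/- For any quantum channel N ∈ CPTP(A_0→A_1), any ε ∈ [0,1], and any DISC superchannel Θ, the dephasing hypothesis-testing relative entropy of coherence is monotone: C_{H,Δ}^ε(Θ[N]) ≤ C_{H,Δ}^ε(N). -/

import Mathlib

open scoped ComplexOrder

noncomputable section

namespace DynCoh

/-- The space of linear maps from operators on `A` to operators on `B`
(candidate quantum channels). -/
abbrev QChanMap (A B : Type) [Fintype A] [Fintype B] : Type :=
  Matrix A A ℂ →ₗ[ℂ] Matrix B B ℂ

section Basic

variable {A0 A1 B0 B1 : Type} [Fintype A0] [Fintype A1] [Fintype B0] [Fintype B1]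

/-- `id_E ⊗ M` : the extension of a supermap `M` by the identity on a reference system `E`. -/
def extendL (E : Type) [Fintype E] (M : QChanMap A0 A1) :
    QChanMap (E × A0) (E × A1) where
  toFun X := Matrix.of fun p q => M (Matrix.of fun a a' => X (p.1, a) (q.1, a')) p.2 q.2
  map_add' X Y := by
    ext p q
    show M (Matrix.of fun a a' => (X + Y) (p.1, a) (q.1, a')) p.2 q.2 = _
    have h : (Matrix.of fun a a' => (X + Y) (p.1, a) (q.1, a'))
        = (Matrix.of fun a a' => X (p.1, a) (q.1, a'))
          + (Matrix.of fun a a' => Y (p.1, a) (q.1, a')) := rfl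
    rw [h, map_add]
    rfl
  map_smul' c X := by
    ext p q
    show M (Matrix.of fun a a' => (c • X) (p.1, a) (q.1, a')) p.2 q.2 = _
    have h : (Matrix.of fun a a' => (c • X) (p.1, a) (q.1, a'))
        = c • (Matrix.of fun a a' => X (p.1, a) (q.1, a')) := rfl
    rw [h, map_smul]
    rfl

/-- Complete positivity: `id_n ⊗ M` maps positive semidefinite matrices to
positive semidefinite matrices, for every finite reference dimension `n`. -/
def CompletelyPositive (M : QChanMap A0 A1) : Prop :=
  ∀ (n : ℕ) (X : Matrix (Fin n × A0) (Fin n × A0) ℂ),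
    X.PosSemidef → ((extendL (Fin n) M) X).PosSemidef

/-- Trace preservation. -/
def TracePreserving (M : QChanMap A0 A1) : Prop :=
  ∀ X : Matrix A0 A0 ℂ, (M X).trace = X.trace

/-- A quantum channel: a completely positive trace-preserving linear map. -/
def IsCPTP (M : QChanMap A0 A1) : Prop :=
  CompletelyPositive M ∧ TracePreserving M

end Basic

/-- The completely dephasing channel `D(ρ) = Σ_i |i⟩⟨i| ρ |i⟩⟨i|` (in the fixed
incoherent basis). -/
def dephasingMap (A : Type) [Fintype A] [DecidableEq A] : QChanMap A A where
  toFun X := Matrix.of fun i j => if i = j then X i j else 0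
  map_add' X Y := by
    ext i j
    by_cases h : i = j <;> simp [h, Matrix.add_apply]
  map_smul' c X := by
    ext i j
    by_cases h : i = j <;> simp [h, Matrix.smul_apply]

section Deph

variable {A0 A1 B0 B1 : Type} [Fintype A0] [Fintype A1] [Fintype B0] [Fintype B1]

/-- The dephasing superchannel `Δ[N] = D ∘ N ∘ D`. -/
def dephChan [DecidableEq A0] [DecidableEq A1] (N : QChanMap A0 A1) : QChanMap A0 A1 :=
  (dephasingMap A1) ∘ₗ N ∘ₗ (dephasingMap A0)

/-- A classical channel: a quantum channel satisfying `N = D ∘ N ∘ D`. -/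
def IsClassical [DecidableEq A0] [DecidableEq A1] (N : QChanMap A0 A1) : Prop :=
  IsCPTP N ∧ N = dephChan N

end Deph

/-- A superchannel from channels `A0 → A1` to channels `B0 → B1`, given by pre- and
post-processing quantum channels together with a reference (memory) system `Fin E`. -/
structure Superchannel (A0 A1 B0 B1 : Type)
    [Fintype A0] [Fintype A1] [Fintype B0] [Fintype B1] where
  E : ℕ
  pre : QChanMap B0 (Fin E × A0)
  post : QChanMap (Fin E × A1) B1
  pre_cptp : IsCPTP pre
  post_cptp : IsCPTP post

section Super

variable {A0 A1 B0 B1 : Type} [Fintype A0] [Fintype A1] [Fintype B0] [Fintype B1]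

/-- Action of a superchannel on a (candidate) channel: `Θ[N] = Q ∘ (id_E ⊗ N) ∘ P`. -/
def Superchannel.app (Θ : Superchannel A0 A1 B0 B1) (N : QChanMap A0 A1) :
    QChanMap B0 B1 :=
  Θ.post ∘ₗ (extendL (Fin Θ.E) N) ∘ₗ Θ.pre

/-- A maximally incoherent superchannel (MISC): maps every classical channel to a
classical channel. -/
def IsMISC [DecidableEq A0] [DecidableEq A1] [DecidableEq B0] [DecidableEq B1]
    (Θ : Superchannel A0 A1 B0 B1) : Prop :=
  ∀ N : QChanMap A0 A1, IsClassical N → IsClassical (Θ.app N)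

/-- A dephasing-covariant incoherent superchannel (DISC): `Δ ∘ Θ = Θ ∘ Δ`. -/
def IsDISC [DecidableEq A0] [DecidableEq A1] [DecidableEq B0] [DecidableEq B1]
    (Θ : Superchannel A0 A1 B0 B1) : Prop :=
  ∀ N : QChanMap A0 A1, dephChan (Θ.app N) = Θ.app (dephChan N)

end Super

/-- The trace norm `‖X‖₁ = Tr √(Xᴴ X)` of a matrix. -/
def traceNorm {A : Type} [Fintype A] [DecidableEq A] (X : Matrix A A ℂ) : ℝ :=
  (((Matrix.posSemidef_conjTranspose_mul_self X).1.eigenvectorUnitary.1 *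
      Matrix.diagonal ((fun x : ℝ => ((Real.sqrt x : ℝ) : ℂ)) ∘
        (Matrix.posSemidef_conjTranspose_mul_self X).1.eigenvalues) *
      (star (Matrix.posSemidef_conjTranspose_mul_self X).1.eigenvectorUnitary :
        Matrix A A ℂ)).trace).re

/-- A density matrix (state): positive semidefinite with unit trace. -/
def IsState {A : Type} [Fintype A] (ρ : Matrix A A ℂ) : Prop :=
  ρ.PosSemidef ∧ ρ.trace = 1

/-- A pure state: a rank-one projector, i.e. a state which is idempotent. -/
def IsPureState {A : Type} [Fintype A] (ρ : Matrix A A ℂ) : Prop :=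
  IsState ρ ∧ ρ * ρ = ρ

section Norms

variable {A0 A1 : Type} [Fintype A0] [Fintype A1] [DecidableEq A1]

/-- The diamond norm `‖X‖◇ = sup_ρ ‖(id_R ⊗ X)(ρ)‖₁`, the supremum running over all
finite reference systems `R` and all states `ρ` on `R ⊗ A0`. -/
def diamondNorm (X : QChanMap A0 A1) : ℝ :=
  ⨆ (n : ℕ), ⨆ ρ : {ρ : Matrix (Fin n × A0) (Fin n × A0) ℂ // IsState ρ},
    traceNorm ((extendL (Fin n) X) ρ.1)

end Norms

/-- Max-relative entropy of states: `D_max(ρ‖σ) = log₂ min{λ ≥ 0 : λσ - ρ ⪰ 0}`. -/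
def DmaxState {A : Type} [Fintype A] (ρ σ : Matrix A A ℂ) : ℝ :=
  Real.logb 2 (sInf {lam : ℝ | 0 ≤ lam ∧ ((lam : ℂ) • σ - ρ).PosSemidef})

section Entropies

variable {A0 A1 : Type} [Fintype A0] [Fintype A1]

/-- Max-relative entropy of channels:
`D̂_max(N‖M) = log₂ min{λ ≥ 0 : λM - N is completely positive}`. -/
def Dmax (N M : QChanMap A0 A1) : ℝ :=
  Real.logb 2 (sInf {lam : ℝ | 0 ≤ lam ∧ CompletelyPositive ((lam : ℂ) • M - N)})

variable [DecidableEq A0] [DecidableEq A1]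

/-- Log-robustness of coherence of a channel: `L̂R(N) = min_{M classical} D̂_max(N‖M)`. -/
def logRob (N : QChanMap A0 A1) : ℝ :=
  sInf {x : ℝ | ∃ M : QChanMap A0 A1, IsClassical M ∧ x = Dmax N M}

/-- Smoothed log-robustness of coherence:
`L̂R_ε(N) = min{L̂R(N') : N' a channel with ½‖N - N'‖◇ ≤ ε}`. -/
def logRobS (ε : ℝ) (N : QChanMap A0 A1) : ℝ :=
  sInf {x : ℝ | ∃ N' : QChanMap A0 A1,
    IsCPTP N' ∧ (1/2) * diamondNorm (N - N') ≤ ε ∧ x = logRob N'}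

/-- Dephasing log-robustness of coherence: `L̂R_Δ(N) = D̂_max(N‖Δ[N])`. -/
def logRobD (N : QChanMap A0 A1) : ℝ :=
  Dmax N (dephChan N)

/-- Smoothed dephasing log-robustness of coherence:
`L̂R_{ε,Δ}(N) = min{D̂_max(N'‖Δ[N']) : N' a channel with ½‖N - N'‖◇ ≤ ε}`. -/
def logRobDS (ε : ℝ) (N : QChanMap A0 A1) : ℝ :=
  sInf {x : ℝ | ∃ N' : QChanMap A0 A1,
    IsCPTP N' ∧ (1/2) * diamondNorm (N - N') ≤ ε ∧ x = logRobD N'}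

end Entropies

/-- The unitary conjugation channel `ρ ↦ U ρ Uᴴ`. -/
def conjChan {A : Type} [Fintype A] (U : Matrix A A ℂ) : QChanMap A A where
  toFun ρ := U * ρ * U.conjTranspose
  map_add' X Y := by simp [Matrix.mul_add, Matrix.add_mul]
  map_smul' c X := by simp [Matrix.mul_smul, Matrix.smul_mul]

/-- The quantum Fourier transform unitary
`F_d = (1/√d) Σ_{j,k} e^{2πijk/d} |j⟩⟨k|`. -/
def QFTmat (d : ℕ) : Matrix (Fin d) (Fin d) ℂ :=
  Matrix.of fun j k =>
    (((Real.sqrt d : ℝ) : ℂ))⁻¹ *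
      Complex.exp (2 * Real.pi * Complex.I * (j : ℕ) * (k : ℕ) / d)

/-- The quantum Fourier transform channel `F_d(ρ) = F_d ρ F_d†`. -/
def QFTChan (d : ℕ) : QChanMap (Fin d) (Fin d) :=
  conjChan (QFTmat d)

/-- The maximally coherent state `ψ_d⁺ = (1/d) Σ_{j,k} |j⟩⟨k|`. -/
def maxCohState (d : ℕ) : Matrix (Fin d) (Fin d) ℂ :=
  Matrix.of fun _ _ => (d : ℂ)⁻¹

/-- The maximal replacement channel `R_d(ρ) = Tr(ρ) ψ_d⁺`. -/
def replChan (d : ℕ) : QChanMap (Fin d) (Fin d) where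
  toFun ρ := ρ.trace • maxCohState d
  map_add' X Y := by simp [Matrix.trace_add, add_smul]
  map_smul' c X := by simp [Matrix.trace_smul, smul_smul]

/-- The normalized Choi matrix `J^N = (id ⊗ N)(φ⁺)`, with entries
`J^N_{(i,k),(j,l)} = (1/|A0|) N(|i⟩⟨j|)_{k,l}`. -/
def choi {A0 A1 : Type} [Fintype A0] [Fintype A1] [DecidableEq A0]
    (N : QChanMap A0 A1) : Matrix (A0 × A1) (A0 × A1) ℂ :=
  Matrix.of fun p q =>
    (Fintype.card A0 : ℂ)⁻¹ * N (Matrix.single p.1 q.1 1) p.2 q.2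

/-- Hypothesis-testing relative entropy of states:
`H_ε(ρ‖σ) = -log₂ min{Tr[Pσ] : 0 ≤ P ≤ I, Tr[Pρ] ≥ 1-ε}`. -/
def Hent (ε : ℝ) {A : Type} [Fintype A] [DecidableEq A] (ρ σ : Matrix A A ℂ) : ℝ :=
  - Real.logb 2 (sInf {x : ℝ | ∃ P : Matrix A A ℂ,
      P.PosSemidef ∧ ((1 : Matrix A A ℂ) - P).PosSemidef ∧
      1 - ε ≤ ((P * ρ).trace).re ∧ x = ((P * σ).trace).re})

section HypTest

variable {A0 A1 : Type} [Fintype A0] [Fintype A1] [DecidableEq A1]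

/-- The hypothesis-testing channel divergence
`Ĥ_ε(N‖M) = max_ψ H_ε((id⊗N)(ψ)‖(id⊗M)(ψ))`, the maximum running over all pure states
on a reference system tensored with the input. -/
def HentChan (ε : ℝ) (N M : QChanMap A0 A1) : ℝ :=
  ⨆ (n : ℕ), ⨆ ψ : {ρ : Matrix (Fin n × A0) (Fin n × A0) ℂ // IsPureState ρ},
    Hent ε ((extendL (Fin n) N) ψ.1) ((extendL (Fin n) M) ψ.1)

variable [DecidableEq A0]

/-- The hypothesis-testing relative entropy of coherence
`C_H^ε(N) = min_{M classical} Ĥ_ε(N‖M)`. -/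
def CH (ε : ℝ) (N : QChanMap A0 A1) : ℝ :=
  sInf {x : ℝ | ∃ M : QChanMap A0 A1, IsClassical M ∧ x = HentChan ε N M}

/-- The dephasing hypothesis-testing relative entropy of coherence
`C_{H,Δ}^ε(N) = Ĥ_ε(N‖Δ[N])`. -/
def CHD (ε : ℝ) (N : QChanMap A0 A1) : ℝ :=
  HentChan ε N (dephChan N)

end HypTest

section Rob

variable {A0 A1 B0 B1 : Type} [Fintype A0] [Fintype A1] [Fintype B0] [Fintype B1]
variable [DecidableEq A0] [DecidableEq A1] [DecidableEq B0] [DecidableEq B1]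

/-- Robustness of coherence of a channel:
`Ĉ_R(N) = min{s ≥ 0 : (N + sM)/(1+s) is classical for some channel M}`. -/
def robC (N : QChanMap A0 A1) : ℝ :=
  sInf {s : ℝ | 0 ≤ s ∧ ∃ M : QChanMap A0 A1, IsCPTP M ∧
    IsClassical ((((1 + s : ℝ) : ℂ))⁻¹ • (N + ((s : ℝ) : ℂ) • M))}

/-- A `δ`-MISC superchannel: `Ĉ_R(Θ[N]) ≤ δ` for every classical channel `N`. -/
def IsDeltaMISC (δ : ℝ) (Θ : Superchannel A0 A1 B0 B1) : Prop :=
  ∀ N : QChanMap A0 A1, IsClassical N → robC (Θ.app N) ≤ δ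

end Rob

section Tensor

variable {A0 A1 B0 B1 : Type} [Fintype A0] [Fintype A1] [Fintype B0] [Fintype B1]
variable [DecidableEq A0] [DecidableEq B0]

/-- The tensor product `N ⊗ M` of two (candidate) channels. -/
def tensorChan (N : QChanMap A0 A1) (M : QChanMap B0 B1) :
    QChanMap (A0 × B0) (A1 × B1) where
  toFun X := Matrix.of fun p q =>
    ∑ a : A0, ∑ a' : A0, ∑ b : B0, ∑ b' : B0,
      X (a, b) (a', b') *
        (N (Matrix.single a a' 1) p.1 q.1 *
          M (Matrix.single b b' 1) p.2 q.2)
  map_add' X Y := by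
    ext p q
    simp [Matrix.add_apply, add_mul, Finset.sum_add_distrib]
  map_smul' c X := by
    ext p q
    simp [Matrix.smul_apply, smul_eq_mul, mul_assoc, Finset.mul_sum]

/-- The `n`-fold tensor power `N^{⊗n}` of a (candidate) channel. -/
def powChan (n : ℕ) (N : QChanMap A0 A1) :
    QChanMap (Fin n → A0) (Fin n → A1) where
  toFun X := Matrix.of fun f g =>
    ∑ h : Fin n → A0, ∑ h' : Fin n → A0,
      X h h' * ∏ i : Fin n, N (Matrix.single (h i) (h' i) 1) (f i) (g i)
  map_add' X Y := by
    ext f g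
    simp [Matrix.add_apply, add_mul, Finset.sum_add_distrib]
  map_smul' c X := by
    ext f g
    simp [Matrix.smul_apply, smul_eq_mul, mul_assoc, Finset.mul_sum]

end Tensor

section Tasks

variable {B0 B1 : Type} [Fintype B0] [Fintype B1] [DecidableEq B0] [DecidableEq B1]

/-- One-shot dynamic coherence cost under MISC superchannels:
`c¹_{ε,MISC}(N) = min{log₂ d² : ½‖N - Θ[F_d]‖◇ ≤ ε for some MISC Θ}`. -/
def costMISC (ε : ℝ) (N : QChanMap B0 B1) : ℝ :=
  sInf {x : ℝ | ∃ d : ℕ, ∃ Θ : Superchannel (Fin d) (Fin d) B0 B1, IsMISC Θ ∧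
    (1/2) * diamondNorm (N - Θ.app (QFTChan d)) ≤ ε ∧ x = Real.logb 2 ((d : ℝ)^2)}

/-- One-shot dynamic coherence cost under DISC superchannels. -/
def costDISC (ε : ℝ) (N : QChanMap B0 B1) : ℝ :=
  sInf {x : ℝ | ∃ d : ℕ, ∃ Θ : Superchannel (Fin d) (Fin d) B0 B1, IsDISC Θ ∧
    (1/2) * diamondNorm (N - Θ.app (QFTChan d)) ≤ ε ∧ x = Real.logb 2 ((d : ℝ)^2)}

/-- One-shot dynamic coherence distillation under MISC superchannels:
`d¹_{ε,MISC}(N) = max{log₂ d² : ½‖Θ[N] - F_d‖◇ ≤ ε for some MISC Θ}`. -/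
def distillMISC (ε : ℝ) (N : QChanMap B0 B1) : ℝ :=
  sSup {x : ℝ | ∃ d : ℕ, ∃ Θ : Superchannel B0 B1 (Fin d) (Fin d), IsMISC Θ ∧
    (1/2) * diamondNorm (Θ.app N - QFTChan d) ≤ ε ∧ x = Real.logb 2 ((d : ℝ)^2)}

/-- One-shot dynamic coherence distillation under DISC superchannels. -/
def distillDISC (ε : ℝ) (N : QChanMap B0 B1) : ℝ :=
  sSup {x : ℝ | ∃ d : ℕ, ∃ Θ : Superchannel B0 B1 (Fin d) (Fin d), IsDISC Θ ∧
    (1/2) * diamondNorm (Θ.app N - QFTChan d) ≤ ε ∧ x = Real.logb 2 ((d : ℝ)^2)}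

/-- Regularized smoothed coherence cost under MISC:
`c^∞_{MISC}(N) = lim_{ε→0⁺} lim_{n→∞} (1/n) c¹_{ε,MISC}(N^{⊗n})`. -/
def costRegMISC (N : QChanMap B0 B1) : ℝ :=
  Filter.limUnder (nhdsWithin (0 : ℝ) (Set.Ioi 0)) fun ε : ℝ =>
    Filter.limUnder Filter.atTop fun n : ℕ => (n : ℝ)⁻¹ * costMISC ε (powChan n N)

/-- Regularized smoothed coherence cost under DISC. -/
def costRegDISC (N : QChanMap B0 B1) : ℝ :=
  Filter.limUnder (nhdsWithin (0 : ℝ) (Set.Ioi 0)) fun ε : ℝ =>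
    Filter.limUnder Filter.atTop fun n : ℕ => (n : ℝ)⁻¹ * costDISC ε (powChan n N)

/-- Asymptotic log-robustness:
`L̂R^∞(N) = lim_{ε→0⁺} liminf_{n→∞} (1/n) L̂R_ε(N^{⊗n})`. -/
def logRobReg (N : QChanMap B0 B1) : ℝ :=
  Filter.limUnder (nhdsWithin (0 : ℝ) (Set.Ioi 0)) fun ε : ℝ =>
    Filter.liminf (fun n : ℕ => (n : ℝ)⁻¹ * logRobS ε (powChan n N)) Filter.atTop

/-- Asymptotic dephasing log-robustness. -/
def logRobDReg (N : QChanMap B0 B1) : ℝ :=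
  Filter.limUnder (nhdsWithin (0 : ℝ) (Set.Ioi 0)) fun ε : ℝ =>
    Filter.liminf (fun n : ℕ => (n : ℝ)⁻¹ * logRobDS ε (powChan n N)) Filter.atTop

end Tasks

section Catalytic

variable {a0 a1 : ℕ}

/-- One-shot catalytic dynamic coherence cost under `δ`-MISC superchannels:
the least `log₂ d²` such that a `δ`-MISC superchannel converts `F_d ⊗ F_l`
(for some catalyst dimension `l`) exactly into `N' ⊗ F_l` with `½‖N' - N‖◇ ≤ ε`. -/
def catCost (ε δ : ℝ) (N : QChanMap (Fin a0) (Fin a1)) : ℝ :=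
  sInf {x : ℝ | ∃ d l : ℕ,
    ∃ Θ : Superchannel (Fin d × Fin l) (Fin d × Fin l) (Fin a0 × Fin l) (Fin a1 × Fin l),
    ∃ N' : QChanMap (Fin a0) (Fin a1), IsCPTP N' ∧
      IsDeltaMISC δ Θ ∧
      Θ.app (tensorChan (QFTChan d) (QFTChan l)) = tensorChan N' (QFTChan l) ∧
      (1/2) * diamondNorm (N' - N) ≤ ε ∧ x = Real.logb 2 ((d : ℝ)^2)}

end Catalytic


/-!
DISC covariance turns `Δ[Θ[N]]` into `Θ[Δ[N]]`, so it suffices to show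
`Ĥ_ε(Θ[N]‖Θ[M]) ≤ Ĥ_ε(N‖M)` for channels `N`, `M`. For a pure input `ψ`, the output
`(id ⊗ Θ[K])(ψ)` is the image of `(id ⊗ K)(ω)`, with `ω = (id ⊗ P)(ψ)`, under a channel that does
not depend on `K`; purifying `ω` writes `(id ⊗ K)(ω)` as a partial trace of `(id ⊗ K)` applied to
a pure state. Both steps are data processing for `H_ε` under positive trace-preserving maps,
which holds because the dual map sends admissible tests to admissible tests.

The real-valued suprema and logarithms need `H_ε` to be bounded and away from `logb 2 0`. For
`ε < 1` this follows from the pinching bound: `|A₀||A₁| Δ[N] - N` is completely positive.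
For `ε = 1` the zero test gives `H_1 = 0` on both sides.
-/

end DynCoh

theorem Real.le_iSup_iSup_of_forall_le {ι : Type*} {κ : ι → Type*} {f : ∀ i, κ i → ℝ} {B : ℝ}
    (hB : ∀ i j, f i j ≤ B) (i : ι) (j : κ i) : f i j ≤ ⨆ i, ⨆ j, f i j :=
  le_ciSup_of_le ⟨max B 0, Set.forall_mem_range.2 fun i =>
      Real.iSup_le (fun j => (hB i j).trans (le_max_left _ _)) (le_max_right _ _)⟩ i
    (le_ciSup ⟨B, Set.forall_mem_range.2 (hB i)⟩ j)

namespace Matrix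

variable {n : Type*} [Fintype n]

theorem posSemidef_of_forall_dotProduct_mulVec_nonneg {A : Matrix n n ℂ}
    (hA : ∀ x, 0 ≤ star x ⬝ᵥ (A *ᵥ x)) : A.PosSemidef := by
  classical
  rw [← isPositive_toEuclideanLin_iff, LinearMap.isPositive_iff_complex]
  intro x
  have hx : inner ℂ (A.toEuclideanLin x) x = star (star x.ofLp ⬝ᵥ (A *ᵥ x.ofLp)) := by
    rw [EuclideanSpace.inner_eq_star_dotProduct, Matrix.dotProduct_star]
    simp [dotProduct_comm]
  obtain ⟨hre, him⟩ := Complex.le_def.mp (hA x.ofLp)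
  rw [hx]
  exact ⟨Complex.ext (by simp) (by simp [← him]), by simpa using hre⟩

theorem PosSemidef.exists_eq_conjTranspose_mul_self {A : Matrix n n ℂ} (hA : A.PosSemidef) :
    ∃ B : Matrix n n ℂ, A = Bᴴ * B := by
  classical
  open scoped MatrixOrder in
  obtain ⟨B, hB⟩ := CStarAlgebra.nonneg_iff_eq_star_mul_self.mp hA.nonneg
  exact ⟨B, hB⟩

theorem PosSemidef.trace_mul_nonneg {A B : Matrix n n ℂ} (hA : A.PosSemidef)
    (hB : B.PosSemidef) : 0 ≤ (A * B).trace := by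
  obtain ⟨C, rfl⟩ := hB.exists_eq_conjTranspose_mul_self
  rw [← Matrix.mul_assoc, trace_mul_comm, ← Matrix.mul_assoc]
  exact (hA.mul_mul_conjTranspose_same C).trace_nonneg

end Matrix

namespace DynCoh

open scoped Matrix

section ChannelCalculus

variable {A0 A1 A2 : Type} [Fintype A0] [Fintype A1] [Fintype A2]

@[simp]
theorem extendL_apply (E : Type) [Fintype E] (M : QChanMap A0 A1)
    (X : Matrix (E × A0) (E × A0) ℂ) (p q : E × A1) :
    extendL E M X p q = M (Matrix.of fun a a' => X (p.1, a) (q.1, a')) p.2 q.2 := rfl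

theorem extendL_sub (E : Type) [Fintype E] (M M' : QChanMap A0 A1) :
    extendL E (M - M') = extendL E M - extendL E M' := rfl

theorem extendL_smul (E : Type) [Fintype E] (c : ℂ) (M : QChanMap A0 A1) :
    extendL E (c • M) = c • extendL E M := rfl

theorem extendL_id (E : Type) [Fintype E] :
    extendL E (LinearMap.id : QChanMap A0 A0) = LinearMap.id := rfl

theorem extendL_extendL (R S : Type) [Fintype R] [Fintype S] (M : QChanMap A0 A1)
    (X : Matrix (R × (S × A0)) (R × (S × A0)) ℂ) :
    extendL R (extendL S M) X
      = (extendL (R × S) M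
          (X.submatrix (Equiv.prodAssoc R S A0) (Equiv.prodAssoc R S A0))).submatrix
        (Equiv.prodAssoc R S A1).symm (Equiv.prodAssoc R S A1).symm := rfl

theorem TracePreserving.comp {F : QChanMap A1 A2} {G : QChanMap A0 A1}
    (hF : TracePreserving F) (hG : TracePreserving G) : TracePreserving (F ∘ₗ G) :=
  fun X => (hF (G X)).trans (hG X)

theorem TracePreserving.extendL {M : QChanMap A0 A1} (hM : TracePreserving M)
    (E : Type) [Fintype E] : TracePreserving (extendL E M) := by
  intro X
  simp only [Matrix.trace, Matrix.diag, Fintype.sum_prod_type]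
  exact Finset.sum_congr rfl fun e _ => hM (Matrix.of fun a a' => X (e, a) (e, a'))

theorem CompletelyPositive.extendL_posSemidef {M : QChanMap A0 A1} (hM : CompletelyPositive M)
    (R : Type) [Fintype R] {X : Matrix (R × A0) (R × A0) ℂ} (hX : X.PosSemidef) :
    (extendL R M X).PosSemidef := by
  let e : R × A0 ≃ Fin (Fintype.card R) × A0 := (Fintype.equivFin R).prodCongr (Equiv.refl A0)
  have h := hM _ _ (hX.submatrix e.symm)
  convert h.submatrix (Prod.map (Fintype.equivFin R) id) using 1
  ext p q
  simp [e]

theorem CompletelyPositive.extendL {M : QChanMap A0 A1} (hM : CompletelyPositive M)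
    (S : Type) [Fintype S] : CompletelyPositive (extendL S M) := fun n X hX => by
  rw [extendL_extendL]
  exact (hM.extendL_posSemidef (Fin n × S) (hX.submatrix _)).submatrix _

theorem CompletelyPositive.comp {F : QChanMap A1 A2} {G : QChanMap A0 A1}
    (hF : CompletelyPositive F) (hG : CompletelyPositive G) : CompletelyPositive (F ∘ₗ G) :=
  fun n X hX => hF n _ (hG n X hX)

theorem CompletelyPositive.add {M M' : QChanMap A0 A1}
    (hM : CompletelyPositive M) (hM' : CompletelyPositive M') : CompletelyPositive (M + M') :=
  fun n X hX => (hM n X hX).add (hM' n X hX)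

theorem CompletelyPositive.smul {M : QChanMap A0 A1} (hM : CompletelyPositive M)
    {c : ℂ} (hc : 0 ≤ c) : CompletelyPositive (c • M) :=
  fun n X hX => (hM n X hX).smul hc

end ChannelCalculus

section PositiveMaps

variable {S T U : Type} [Fintype S] [Fintype T] [Fintype U]

def IsPositiveMap (Λ : QChanMap S T) : Prop :=
  ∀ X : Matrix S S ℂ, X.PosSemidef → (Λ X).PosSemidef

theorem IsPositiveMap.comp {F : QChanMap T U} {G : QChanMap S T}
    (hF : IsPositiveMap F) (hG : IsPositiveMap G) : IsPositiveMap (F ∘ₗ G) :=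
  fun X hX => hF _ (hG X hX)

theorem isPositiveMap_extendL {M : QChanMap S T} (hM : CompletelyPositive M)
    (R : Type) [Fintype R] : IsPositiveMap (extendL R M) :=
  fun _ hX => hM.extendL_posSemidef R hX

def relabel (e : S ≃ T) : QChanMap S T :=
  (Matrix.reindexLinearEquiv ℂ ℂ e e).toLinearMap

@[simp]
theorem relabel_apply (e : S ≃ T) (X : Matrix S S ℂ) :
    relabel e X = X.submatrix e.symm e.symm := rfl

theorem isPositiveMap_relabel (e : S ≃ T) : IsPositiveMap (relabel e) :=
  fun _ hX => hX.submatrix _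

theorem tracePreserving_relabel (e : S ≃ T) : TracePreserving (relabel e) := fun X => by
  simpa [Matrix.trace] using e.symm.sum_comp fun s => X s s

variable (G : Type) [Fintype G] {R A : Type} [Fintype R] [Fintype A]

def partialTraceRef : QChanMap ((G × R) × A) (R × A) where
  toFun X := ∑ g : G, X.submatrix (fun p => ((g, p.1), p.2)) (fun p => ((g, p.1), p.2))
  map_add' X Y := by ext; simp [Matrix.sum_apply, Finset.sum_add_distrib]
  map_smul' c X := by ext; simp [Matrix.sum_apply, Finset.mul_sum]

theorem partialTraceRef_apply (X : Matrix ((G × R) × A) ((G × R) × A) ℂ) (p q : R × A) :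
    partialTraceRef G X p q = ∑ g : G, X ((g, p.1), p.2) ((g, q.1), q.2) := by
  simp [partialTraceRef, Matrix.sum_apply]

theorem isPositiveMap_partialTraceRef : IsPositiveMap (partialTraceRef G (R := R) (A := A)) :=
  fun _ hX => Matrix.posSemidef_sum _ fun _ _ => hX.submatrix _

theorem tracePreserving_partialTraceRef :
    TracePreserving (partialTraceRef G (R := R) (A := A)) := by
  intro X
  simp only [Matrix.trace, Matrix.diag, partialTraceRef_apply]
  rw [Finset.sum_comm]
  simp only [Fintype.sum_prod_type]

theorem partialTraceRef_extendL {B : Type} [Fintype B] (M : QChanMap A B)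
    (X : Matrix ((G × R) × A) ((G × R) × A) ℂ) :
    partialTraceRef G (extendL (G × R) M X) = extendL R M (partialTraceRef G X) := by
  ext p q
  have h : Matrix.of (fun a a' => partialTraceRef G X (p.1, a) (q.1, a'))
      = ∑ g : G, Matrix.of fun a a' => X ((g, p.1), a) ((g, q.1), a') := by
    ext
    simp [partialTraceRef_apply, Matrix.sum_apply]
  rw [extendL_apply, h, map_sum, Matrix.sum_apply, partialTraceRef_apply]
  rfl

end PositiveMaps

section States

variable {S T : Type} [Fintype S] [Fintype T]

theorem IsState.map {Λ : QChanMap S T} (hΛ : IsPositiveMap Λ) (hΛtp : TracePreserving Λ)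
    {ρ : Matrix S S ℂ} (hρ : IsState ρ) : IsState (Λ ρ) :=
  ⟨hΛ ρ hρ.1, (hΛtp ρ).trans hρ.2⟩

theorem IsCPTP.isState_extendL {N : QChanMap S T} (hN : IsCPTP N) (R : Type) [Fintype R]
    {X : Matrix (R × S) (R × S) ℂ} (hX : IsState X) : IsState (extendL R N X) :=
  hX.map (isPositiveMap_extendL hN.1 R) (hN.2.extendL R)

theorem IsPureState.submatrix {Ψ : Matrix S S ℂ} (hΨ : IsPureState Ψ) (e : T ≃ S) :
    IsPureState (Ψ.submatrix e e) :=
  ⟨hΨ.1.map (isPositiveMap_relabel e.symm) (tracePreserving_relabel e.symm),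
    by rw [Matrix.submatrix_mul_equiv, hΨ.2]⟩

theorem isPureState_vecMulVec {u : S → ℂ} (hu : u ⬝ᵥ star u = 1) :
    IsPureState (Matrix.vecMulVec u (star u)) :=
  ⟨⟨Matrix.posSemidef_vecMulVec_self_star u, by rw [Matrix.trace_vecMulVec, hu]⟩, by
    rw [Matrix.vecMulVec_mul_vecMulVec, dotProduct_comm, hu, one_smul]⟩

theorem one_le_of_posSemidef_smul_sub {lam : ℝ} {ρ σ : Matrix S S ℂ} (hρ : ρ.trace = 1)
    (hσ : σ.trace = 1) (hdom : ((lam : ℂ) • σ - ρ).PosSemidef) : 1 ≤ lam := by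
  simpa [Matrix.trace_sub, Matrix.trace_smul, hρ, hσ] using
    (Complex.le_def.mp hdom.trace_nonneg).1

theorem IsState.exists_isPureState_partialTraceRef {R A : Type} [Fintype R] [Fintype A]
    {ω : Matrix (R × A) (R × A) ℂ} (hω : IsState ω) :
    ∃ Ψ : Matrix (((R × A) × R) × A) (((R × A) × R) × A) ℂ,
      IsPureState Ψ ∧ partialTraceRef (R × A) Ψ = ω := by
  obtain ⟨B, hB⟩ := hω.1.exists_eq_conjTranspose_mul_self
  let u : ((R × A) × R) × A → ℂ := fun p => star (B p.1.1 (p.1.2, p.2))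
  have hu : partialTraceRef (R × A) (Matrix.vecMulVec u (star u)) = ω := by
    ext p q
    simp [partialTraceRef_apply, hB, Matrix.mul_apply, Matrix.vecMulVec_apply, u]
  refine ⟨_, isPureState_vecMulVec ?_, hu⟩
  rw [← Matrix.trace_vecMulVec, ← tracePreserving_partialTraceRef, hu, hω.2]

end States

section HypothesisTesting

variable {S T : Type} [Fintype S] [Fintype T] [DecidableEq S]

def testSet (ε : ℝ) (ρ σ : Matrix S S ℂ) : Set ℝ :=
  {x | ∃ P : Matrix S S ℂ, P.PosSemidef ∧ (1 - P).PosSemidef ∧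
    1 - ε ≤ (P * ρ).trace.re ∧ x = (P * σ).trace.re}

theorem Hent_eq (ε : ℝ) (ρ σ : Matrix S S ℂ) :
    Hent ε ρ σ = -Real.logb 2 (sInf (testSet ε ρ σ)) := rfl

variable {ε lam : ℝ} {ρ σ : Matrix S S ℂ}

theorem one_mem_testSet (hε : 0 ≤ ε) (hρ : ρ.trace = 1) (hσ : σ.trace = 1) :
    1 ∈ testSet ε ρ σ :=
  ⟨1, .one, by simpa using Matrix.PosSemidef.zero, by simp [hρ, hε], by simp [hσ]⟩

theorem nonneg_of_mem_testSet (hσ : σ.PosSemidef) {x : ℝ} (hx : x ∈ testSet ε ρ σ) : 0 ≤ x := by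
  obtain ⟨P, hP, -, -, rfl⟩ := hx
  exact (Complex.le_def.mp (hP.trace_mul_nonneg hσ)).1

theorem le_mul_of_mem_testSet (hdom : ((lam : ℂ) • σ - ρ).PosSemidef) {x : ℝ}
    (hx : x ∈ testSet ε ρ σ) : 1 - ε ≤ lam * x := by
  obtain ⟨P, hP, -, hρP, rfl⟩ := hx
  have h := (Complex.le_def.mp (hP.trace_mul_nonneg hdom)).1
  simp only [Matrix.mul_sub, Matrix.mul_smul, Matrix.trace_sub, Matrix.trace_smul,
    Complex.sub_re, Complex.zero_re, smul_eq_mul, Complex.re_ofReal_mul] at h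
  linarith

theorem div_le_sInf_testSet (hε0 : 0 ≤ ε) (hρ : IsState ρ) (hσ : IsState σ)
    (hdom : ((lam : ℂ) • σ - ρ).PosSemidef) : (1 - ε) / lam ≤ sInf (testSet ε ρ σ) := by
  have hlam : 0 < lam := one_pos.trans_le (one_le_of_posSemidef_smul_sub hρ.2 hσ.2 hdom)
  refine le_csInf ⟨1, one_mem_testSet hε0 hρ.2 hσ.2⟩ fun x hx => ?_
  rw [div_le_iff₀' hlam]
  exact le_mul_of_mem_testSet hdom hx

theorem Hent_le_of_posSemidef_smul_sub (hε0 : 0 ≤ ε) (hε1 : ε < 1) (hρ : IsState ρ)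
    (hσ : IsState σ) (hdom : ((lam : ℂ) • σ - ρ).PosSemidef) :
    Hent ε ρ σ ≤ -Real.logb 2 ((1 - ε) / lam) := by
  have hlam : 0 < lam := one_pos.trans_le (one_le_of_posSemidef_smul_sub hρ.2 hσ.2 hdom)
  exact neg_le_neg (Real.logb_le_logb_of_le one_lt_two (div_pos (by linarith) hlam)
    (div_le_sInf_testSet hε0 hρ hσ hdom))

theorem Hent_nonneg (hε : 0 ≤ ε) (hρ : IsState ρ) (hσ : IsState σ) : 0 ≤ Hent ε ρ σ := by
  have hmem := one_mem_testSet hε hρ.2 hσ.2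
  have hbdd : BddBelow (testSet ε ρ σ) := ⟨0, fun _ => nonneg_of_mem_testSet hσ.1⟩
  exact neg_nonneg.mpr (Real.logb_nonpos one_lt_two
    (le_csInf ⟨1, hmem⟩ fun _ => nonneg_of_mem_testSet hσ.1) (csInf_le hbdd hmem))

theorem Hent_one (hσ : σ.PosSemidef) : Hent 1 ρ σ = 0 := by
  have hzero : 0 ∈ testSet 1 ρ σ :=
    ⟨0, .zero, by simpa using Matrix.PosSemidef.one, by simp, by simp⟩
  have hbdd : BddBelow (testSet 1 ρ σ) := ⟨0, fun _ => nonneg_of_mem_testSet hσ⟩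
  rw [Hent_eq, le_antisymm (csInf_le hbdd hzero) (le_csInf ⟨0, hzero⟩ fun _ =>
    nonneg_of_mem_testSet hσ), Real.logb_zero, neg_zero]

def dualMap (Λ : QChanMap S T) (P : Matrix T T ℂ) : Matrix S S ℂ :=
  Matrix.of fun s s' => (P * Λ (Matrix.single s' s 1)).trace

theorem trace_dualMap_mul (Λ : QChanMap S T) (P : Matrix T T ℂ) (ρ : Matrix S S ℂ) :
    (dualMap Λ P * ρ).trace = (P * Λ ρ).trace := by
  have hρ : ρ = ∑ i, ∑ j, ρ i j • Matrix.single i j 1 := by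
    conv_lhs => rw [Matrix.matrix_eq_sum_single ρ]
    simp [Matrix.smul_single]
  rw [Matrix.trace_mul_comm]
  conv_rhs => rw [hρ]
  simp only [map_sum, map_smul, Matrix.mul_sum, Matrix.mul_smul, Matrix.trace_sum,
    Matrix.trace_smul, smul_eq_mul]
  rfl

theorem dualMap_one_sub [DecidableEq T] {Λ : QChanMap S T} (hΛ : TracePreserving Λ)
    (P : Matrix T T ℂ) :
    dualMap Λ (1 - P) = 1 - dualMap Λ P := by
  ext s s'
  rcases eq_or_ne s s' with rfl | h
  · simp [dualMap, Matrix.sub_mul, Matrix.trace_sub, hΛ (Matrix.single s s 1)]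
  · simp [dualMap, Matrix.sub_mul, Matrix.trace_sub, hΛ (Matrix.single s' s 1),
      Matrix.trace_single_eq_of_ne s' s _ h.symm, h]

theorem IsPositiveMap.posSemidef_dualMap {Λ : QChanMap S T} (hΛ : IsPositiveMap Λ)
    {P : Matrix T T ℂ} (hP : P.PosSemidef) : (dualMap Λ P).PosSemidef := by
  refine Matrix.posSemidef_of_forall_dotProduct_mulVec_nonneg fun x => ?_
  rw [dotProduct_comm, ← Matrix.trace_vecMulVec, ← Matrix.mul_vecMulVec, trace_dualMap_mul]
  exact hP.trace_mul_nonneg (hΛ _ (Matrix.posSemidef_vecMulVec_self_star x))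

theorem testSet_map_subset [DecidableEq T] {Λ : QChanMap S T} (hΛ : IsPositiveMap Λ)
    (hΛtp : TracePreserving Λ) :
    testSet ε (Λ ρ) (Λ σ) ⊆ testSet ε ρ σ := by
  rintro x ⟨P, hP, hP1, hρP, rfl⟩
  refine ⟨dualMap Λ P, hΛ.posSemidef_dualMap hP, ?_, ?_, ?_⟩
  · rw [← dualMap_one_sub hΛtp]
    exact hΛ.posSemidef_dualMap hP1
  · rwa [trace_dualMap_mul]
  · rw [trace_dualMap_mul]

/-- `hdom` keeps `sInf (testSet ε ρ σ)` positive, away from the junk value `logb 2 0 = 0`. -/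
theorem Hent_map_le [DecidableEq T] {Λ : QChanMap S T} (hΛ : IsPositiveMap Λ)
    (hΛtp : TracePreserving Λ) (hε0 : 0 ≤ ε) (hε1 : ε < 1) (hρ : IsState ρ) (hσ : IsState σ)
    (hdom : ((lam : ℂ) • σ - ρ).PosSemidef) : Hent ε (Λ ρ) (Λ σ) ≤ Hent ε ρ σ := by
  have hlam : 0 < lam := one_pos.trans_le (one_le_of_posSemidef_smul_sub hρ.2 hσ.2 hdom)
  have hpos : 0 < sInf (testSet ε ρ σ) :=
    (div_pos (by linarith) hlam).trans_le (div_le_sInf_testSet hε0 hρ hσ hdom)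
  have hinf : sInf (testSet ε ρ σ) ≤ sInf (testSet ε (Λ ρ) (Λ σ)) :=
    csInf_le_csInf ⟨0, fun _ => nonneg_of_mem_testSet hσ.1⟩
      ⟨1, one_mem_testSet hε0 (hρ.map hΛ hΛtp).2 (hσ.map hΛ hΛtp).2⟩
      (testSet_map_subset hΛ hΛtp)
  exact neg_le_neg (Real.logb_le_logb_of_le one_lt_two hpos hinf)

end HypothesisTesting

section Dephasing

variable {R A A0 A1 : Type} [Fintype R] [Fintype A] [Fintype A0] [Fintype A1]
  [DecidableEq R] [DecidableEq A] [DecidableEq A0] [DecidableEq A1]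

@[simp]
theorem dephasingMap_apply (X : Matrix A A ℂ) (i j : A) :
    dephasingMap A X i j = if i = j then X i j else 0 := rfl

theorem tracePreserving_dephasingMap : TracePreserving (dephasingMap A) := by
  intro X
  simp [Matrix.trace]

variable (R) in
def blockProj (i : A) : Matrix (R × A) (R × A) ℂ :=
  Matrix.diagonal fun p => if p.2 = i then 1 else 0

theorem extendL_dephasingMap_eq_sum (X : Matrix (R × A) (R × A) ℂ) :
    extendL R (dephasingMap A) X = ∑ i, blockProj R i * X * (blockProj R i)ᴴ := by
  ext p q
  simp [blockProj, Matrix.sum_apply, Matrix.diagonal_conjTranspose, Matrix.diagonal_mul,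
    Matrix.mul_diagonal, eq_comm]

private theorem sum_sum_indicator_sub_mul (a b : A) : ∑ i : A, ∑ j : A,
    ((if a = i then (1 : ℂ) else 0) - if a = j then 1 else 0) *
      ((if b = i then 1 else 0) - if b = j then 1 else 0)
      = 2 * ((Fintype.card A : ℂ) * (if a = b then 1 else 0) - 1) := by
  have hdiag : ∑ i : A, (if a = i then (1 : ℂ) else 0) * (if b = i then 1 else 0)
      = if a = b then 1 else 0 := by
    simp [Finset.sum_ite_eq]
  have hone : ∀ c : A, ∑ i : A, (if c = i then (1 : ℂ) else 0) = 1 := by simp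
  simp only [mul_sub, sub_mul, Finset.sum_sub_distrib, Finset.sum_const, Finset.card_univ,
    ← Finset.sum_mul, ← Finset.mul_sum, hdiag, hone, nsmul_eq_mul]
  ring

theorem card_smul_extendL_dephasingMap_sub_eq_sum (X : Matrix (R × A) (R × A) ℂ) :
    (Fintype.card A : ℂ) • extendL R (dephasingMap A) X - X
      = (2 : ℂ)⁻¹ • ∑ i, ∑ j, (blockProj R i - blockProj R j) * X *
          (blockProj R i - blockProj R j)ᴴ := by
  ext p q
  have h := sum_sum_indicator_sub_mul p.2 q.2
  simp only [blockProj, Matrix.sub_apply, Matrix.smul_apply, Matrix.sum_apply,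
    Matrix.diagonal_sub, Matrix.diagonal_conjTranspose, Matrix.diagonal_mul, Matrix.mul_diagonal,
    mul_right_comm _ (X p q), ← Finset.sum_mul, extendL_apply, dephasingMap_apply,
    Matrix.of_apply, Pi.star_apply, star_sub, RCLike.star_def,
    MonoidWithZeroHom.map_ite_one_zero, h, smul_eq_mul]
  split_ifs <;> ring

theorem completelyPositive_dephasingMap : CompletelyPositive (dephasingMap A) := fun _ _ hX => by
  rw [extendL_dephasingMap_eq_sum]
  exact Matrix.posSemidef_sum _ fun _ _ => hX.mul_mul_conjTranspose_same _

theorem completelyPositive_card_smul_dephasingMap_sub_id :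
    CompletelyPositive ((Fintype.card A : ℂ) • dephasingMap A - LinearMap.id) := fun _ _ hX => by
  rw [extendL_sub, extendL_smul, extendL_id, LinearMap.sub_apply, LinearMap.smul_apply,
    LinearMap.id_apply, card_smul_extendL_dephasingMap_sub_eq_sum]
  exact (Matrix.posSemidef_sum _ fun _ _ => Matrix.posSemidef_sum _ fun _ _ =>
    hX.mul_mul_conjTranspose_same _).smul (by norm_num [Complex.le_def])

theorem IsCPTP.dephChan {N : QChanMap A0 A1} (hN : IsCPTP N) : IsCPTP (dephChan N) :=
  ⟨completelyPositive_dephasingMap.comp (hN.1.comp completelyPositive_dephasingMap),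
    tracePreserving_dephasingMap.comp (hN.2.comp tracePreserving_dephasingMap)⟩

theorem CompletelyPositive.card_smul_dephChan_sub {N : QChanMap A0 A1}
    (hN : CompletelyPositive N) :
    CompletelyPositive (((Fintype.card A0 * Fintype.card A1 : ℕ) : ℂ) • dephChan N - N) := by
  set c0 : ℂ := (Fintype.card A0 : ℂ)
  set c1 : ℂ := (Fintype.card A1 : ℂ)
  have key : ((Fintype.card A0 * Fintype.card A1 : ℕ) : ℂ) • dephChan N - N
      = ((c1 • dephasingMap A1 - LinearMap.id) ∘ₗ N) ∘ₗ (c0 • dephasingMap A0)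
        + N ∘ₗ (c0 • dephasingMap A0 - LinearMap.id) := by
    ext X : 1
    simp only [dephChan, c0, c1, Nat.cast_mul, LinearMap.add_apply, LinearMap.sub_apply,
      LinearMap.smul_apply, LinearMap.comp_apply, LinearMap.id_apply, map_sub, map_smul]
    module
  rw [key]
  exact ((completelyPositive_card_smul_dephasingMap_sub_id.comp hN).comp
    (completelyPositive_dephasingMap.smul (by positivity))).add
    (hN.comp completelyPositive_card_smul_dephasingMap_sub_id)

end Dephasing

section ChannelDivergence

variable {A0 A1 : Type} [Fintype A0] [Fintype A1] [DecidableEq A1]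
  {ε lam : ℝ} {N M : QChanMap A0 A1}

theorem HentChan_one (hM : CompletelyPositive M) : HentChan 1 N M = 0 := by
  have h : ∀ n (ψ : {ρ : Matrix (Fin n × A0) (Fin n × A0) ℂ // IsPureState ρ}),
      Hent 1 (extendL (Fin n) N ψ.1) (extendL (Fin n) M ψ.1) = 0 :=
    fun n ψ => Hent_one (hM n ψ.1 ψ.2.1.1)
  simp only [HentChan, h, Real.iSup_const_zero]

theorem HentChan_nonneg (hε0 : 0 ≤ ε) (hN : IsCPTP N) (hM : IsCPTP M) : 0 ≤ HentChan ε N M :=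
  Real.iSup_nonneg fun _ => Real.iSup_nonneg fun ψ =>
    Hent_nonneg hε0 (hN.isState_extendL _ ψ.2.1) (hM.isState_extendL _ ψ.2.1)

theorem Hent_extendL_le_HentChan_of_isPureState (hε0 : 0 ≤ ε) (hε1 : ε < 1) (hN : IsCPTP N)
    (hM : IsCPTP M) (hdom : CompletelyPositive ((lam : ℂ) • M - N)) {R : Type} [Fintype R]
    [DecidableEq R] {Ψ : Matrix (R × A0) (R × A0) ℂ} (hΨ : IsPureState Ψ) :
    Hent ε (extendL R N Ψ) (extendL R M Ψ) ≤ HentChan ε N M := by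
  let e := Fintype.equivFin R
  set Ψ' := Ψ.submatrix (Prod.map e.symm id) (Prod.map e.symm id)
  have hΨ' : IsPureState Ψ' := hΨ.submatrix (e.symm.prodCongr (Equiv.refl A0))
  have hrel : ∀ K : QChanMap A0 A1,
      extendL R K Ψ = relabel (e.prodCongr (Equiv.refl A1)).symm (extendL (Fin _) K Ψ') := by
    intro K
    ext p q
    simp [Ψ']
  have hbound : ∀ n (ψ : {ρ : Matrix (Fin n × A0) (Fin n × A0) ℂ // IsPureState ρ}),
      Hent ε (extendL (Fin n) N ψ.1) (extendL (Fin n) M ψ.1) ≤ -Real.logb 2 ((1 - ε) / lam) :=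
    fun n ψ => Hent_le_of_posSemidef_smul_sub hε0 hε1 (hN.isState_extendL _ ψ.2.1)
      (hM.isState_extendL _ ψ.2.1) (hdom n ψ.1 ψ.2.1.1)
  rw [hrel N, hrel M]
  calc _ ≤ Hent ε (extendL (Fin _) N Ψ') (extendL (Fin _) M Ψ') :=
        Hent_map_le (isPositiveMap_relabel _) (tracePreserving_relabel _) hε0 hε1
          (hN.isState_extendL _ hΨ'.1) (hM.isState_extendL _ hΨ'.1) (hdom _ Ψ' hΨ'.1.1)
    _ ≤ HentChan ε N M := Real.le_iSup_iSup_of_forall_le hbound _ ⟨Ψ', hΨ'⟩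

theorem Hent_extendL_le_HentChan [DecidableEq A0] (hε0 : 0 ≤ ε) (hε1 : ε < 1) (hN : IsCPTP N)
    (hM : IsCPTP M) (hdom : CompletelyPositive ((lam : ℂ) • M - N)) {R : Type} [Fintype R] [DecidableEq R]
    {ω : Matrix (R × A0) (R × A0) ℂ} (hω : IsState ω) :
    Hent ε (extendL R N ω) (extendL R M ω) ≤ HentChan ε N M := by
  obtain ⟨Ψ, hΨ, rfl⟩ := hω.exists_isPureState_partialTraceRef
  rw [← partialTraceRef_extendL, ← partialTraceRef_extendL]
  exact (Hent_map_le (isPositiveMap_partialTraceRef _) (tracePreserving_partialTraceRef _) hε0 hε1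
    (hN.isState_extendL _ hΨ.1) (hM.isState_extendL _ hΨ.1)
    (hdom.extendL_posSemidef _ hΨ.1.1)).trans
    (Hent_extendL_le_HentChan_of_isPureState hε0 hε1 hN hM hdom hΨ)

end ChannelDivergence

section Superchannels

variable {A0 A1 B0 B1 : Type} [Fintype A0] [Fintype A1] [Fintype B0] [Fintype B1]

theorem Superchannel.completelyPositive_app (Θ : Superchannel A0 A1 B0 B1) {M : QChanMap A0 A1}
    (hM : CompletelyPositive M) : CompletelyPositive (Θ.app M) :=
  Θ.post_cptp.1.comp ((hM.extendL _).comp Θ.pre_cptp.1)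

theorem Superchannel.extendL_app (Θ : Superchannel A0 A1 B0 B1) (n : ℕ) (M : QChanMap A0 A1)
    (ψ : Matrix (Fin n × B0) (Fin n × B0) ℂ) :
    extendL (Fin n) (Θ.app M) ψ
      = (extendL (Fin n) Θ.post ∘ₗ relabel (Equiv.prodAssoc (Fin n) (Fin Θ.E) A1))
          (extendL (Fin n × Fin Θ.E) M
            (relabel (Equiv.prodAssoc (Fin n) (Fin Θ.E) A0).symm (extendL (Fin n) Θ.pre ψ))) :=
  rfl

variable [DecidableEq A0] [DecidableEq A1] [DecidableEq B1] {ε lam : ℝ} {N M : QChanMap A0 A1}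

theorem HentChan_superchannel_app_le (Θ : Superchannel A0 A1 B0 B1) (hε0 : 0 ≤ ε) (hε1 : ε < 1)
    (hN : IsCPTP N) (hM : IsCPTP M) (hdom : CompletelyPositive ((lam : ℂ) • M - N)) :
    HentChan ε (Θ.app N) (Θ.app M) ≤ HentChan ε N M := by
  have h0 := HentChan_nonneg hε0 hN hM
  refine Real.iSup_le (fun n => Real.iSup_le (fun ψ => ?_) h0) h0
  rw [Θ.extendL_app, Θ.extendL_app]
  set Λ := extendL (Fin n) Θ.post ∘ₗ relabel (Equiv.prodAssoc (Fin n) (Fin Θ.E) A1)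
  set ω := relabel (Equiv.prodAssoc (Fin n) (Fin Θ.E) A0).symm (extendL (Fin n) Θ.pre ψ.1)
  have hΛ : IsPositiveMap Λ :=
    (isPositiveMap_extendL Θ.post_cptp.1 _).comp (isPositiveMap_relabel _)
  have hΛtp : TracePreserving Λ := (Θ.post_cptp.2.extendL _).comp (tracePreserving_relabel _)
  have hω : IsState ω :=
    (Θ.pre_cptp.isState_extendL _ ψ.2.1).map (isPositiveMap_relabel _) (tracePreserving_relabel _)
  exact (Hent_map_le hΛ hΛtp hε0 hε1 (hN.isState_extendL _ hω) (hM.isState_extendL _ hω)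
    (hdom.extendL_posSemidef _ hω.1)).trans (Hent_extendL_le_HentChan hε0 hε1 hN hM hdom hω)

end Superchannels

/-- The dephasing hypothesis-testing relative entropy of coherence is
monotone under DISC superchannels: `C_{H,Δ}^ε(Θ[N]) ≤ C_{H,Δ}^ε(N)`. -/
theorem stmt11 {a0 a1 b0 b1 : ℕ}
    (N : QChanMap (Fin a0) (Fin a1)) (hN : IsCPTP N)
    (ε : ℝ) (hε0 : 0 ≤ ε) (hε1 : ε ≤ 1)
    (Θ : Superchannel (Fin a0) (Fin a1) (Fin b0) (Fin b1)) (hΘ : IsDISC Θ) :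
    CHD ε (Θ.app N) ≤ CHD ε N := by
  have hΔN : IsCPTP (dephChan N) := hN.dephChan
  rw [CHD, CHD, hΘ N]
  rcases hε1.lt_or_eq with hε1 | rfl
  · have hdom : CompletelyPositive ((((a0 * a1 : ℕ) : ℝ) : ℂ) • dephChan N - N) := by
      simpa only [Complex.ofReal_natCast, Fintype.card_fin] using hN.1.card_smul_dephChan_sub
    exact HentChan_superchannel_app_le Θ hε0 hε1 hN hΔN hdom
  · rw [HentChan_one (Θ.completelyPositive_app hΔN.1), HentChan_one hΔN.1]

end DynCoh
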